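/- arXiv:2008.11296 — 4 statements merged into one kernel-verified Lean document; each statement's English description precedes it below -/
import Mathlib

section
/- Let G=(V,E) be a finite connected simple graph, let f : V → ℝ, and let W ⊆ V be a nonempty subset of vertices. Then |(1/|V|)·Σ_{x∈V} f(x) − (1/|W|)·Σ_{x∈W} f(x)| ≤ W₁((1/|W|)·Σ_{x∈W} δ_x, dx) · max_{x_i ∼ x_j} |f(x_i) − f(x_j)|, where the maximum is over pairs of adjacent vertices and dx is the function assigning mass 1/|V| to each vertex. -/
open Finset

/-- Earth mover (Wasserstein-1) distance between two nonnegative mass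
distributions on the vertices of a graph, with respect to the shortest-path
metric: infimum over couplings `γ` of the total transport cost. -/
noncomputable def W1 {V : Type*} [Fintype V] (G : SimpleGraph V) (p q : V → ℝ) : ℝ :=
  sInf { c : ℝ | ∃ γ : V → V → ℝ, (∀ x y, 0 ≤ γ x y) ∧
    (∀ x, ∑ y, γ x y = p x) ∧ (∀ y, ∑ x, γ x y = q y) ∧
    c = ∑ x, ∑ y, γ x y * (G.dist x y : ℝ) }

private lemma walk_lip {V : Type*} (G : SimpleGraph V) (f : V → ℝ) (L : ℝ)
    (hL : ∀ x y, G.Adj x y → |f x - f y| ≤ L) :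
    ∀ {x y : V} (p : G.Walk x y), |f x - f y| ≤ L * p.length := by
  intro x y p
  induction p with
  | nil => simp
  | @cons a b c h q ih =>
    have h1 := hL a b h
    calc |f a - f c| ≤ |f a - f b| + |f b - f c| := abs_sub_le _ _ _
      _ ≤ L + L * q.length := add_le_add h1 ih
      _ = L * ((SimpleGraph.Walk.cons h q).length : ℝ) := by
          rw [SimpleGraph.Walk.length_cons]; push_cast; ring

/-- Kantorovich–Rubinstein inequality on a finite connected graph. -/
theorem stmt0 {V : Type*} [Fintype V] [DecidableEq V] (G : SimpleGraph V)
    (hconn : G.Connected) (f : V → ℝ) (W : Finset V) (hW : W.Nonempty) :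
    |(1 / (Fintype.card V : ℝ)) * ∑ x, f x - (1 / (W.card : ℝ)) * ∑ x ∈ W, f x| ≤
      W1 G (fun x => (1 / (W.card : ℝ)) * (if x ∈ W then 1 else 0))
        (fun _ => 1 / (Fintype.card V : ℝ)) *
      sSup { d : ℝ | ∃ x y, G.Adj x y ∧ d = |f x - f y| } := by
  classical
  obtain ⟨w0, hw0⟩ := hW
  have hVpos : 0 < (Fintype.card V : ℝ) := by
    have : 0 < Fintype.card V := Fintype.card_pos_iff.mpr ⟨w0⟩
    exact_mod_cast this
  have hWpos : 0 < (W.card : ℝ) := by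
    exact_mod_cast Finset.card_pos.mpr ⟨w0, hw0⟩
  set p : V → ℝ := fun x => (1 / (W.card : ℝ)) * (if x ∈ W then 1 else 0) with hp
  set q : V → ℝ := fun _ => 1 / (Fintype.card V : ℝ) with hq
  set D := { d : ℝ | ∃ x y, G.Adj x y ∧ d = |f x - f y| } with hD
  set L := sSup D with hLdef
  -- basic sums
  have hpsum : ∑ x, p x = 1 := by
    simp only [hp, ← Finset.mul_sum]
    rw [Finset.sum_ite_mem, Finset.univ_inter, Finset.sum_const, nsmul_eq_mul, mul_one]
    field_simp
  have hqsum : ∑ y, q y = 1 := by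
    simp only [hq, Finset.sum_const, nsmul_eq_mul, Finset.card_univ]
    field_simp
  have hpnn : ∀ x, 0 ≤ p x := by
    intro x; simp only [hp]; positivity
  have hqnn : ∀ y, 0 ≤ q y := by
    intro y; simp only [hq]; positivity
  have hA : ∑ x, p x * f x = (1 / (W.card : ℝ)) * ∑ x ∈ W, f x := by
    calc ∑ x, p x * f x
        = ∑ x, (if x ∈ W then (1 / (W.card : ℝ)) * f x else 0) := by
          refine Finset.sum_congr rfl fun x _ => ?_
          by_cases hx : x ∈ W <;> simp [hp, hx]
      _ = ∑ x ∈ W, (1 / (W.card : ℝ)) * f x := by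
          rw [Finset.sum_ite_mem, Finset.univ_inter]
      _ = (1 / (W.card : ℝ)) * ∑ x ∈ W, f x := by rw [Finset.mul_sum]
  have hB : ∑ y, q y * f y = (1 / (Fintype.card V : ℝ)) * ∑ x, f x := by
    simp only [hq, Finset.mul_sum]
  -- Lipschitz constant facts
  have hDbdd : BddAbove D := by
    apply Set.Finite.bddAbove
    apply Set.Finite.subset (Set.finite_range (fun z : V × V => |f z.1 - f z.2|))
    rintro d ⟨x, y, -, hd⟩
    exact ⟨(x, y), hd.symm⟩
  have hL : ∀ x y, G.Adj x y → |f x - f y| ≤ L :=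
    fun x y h => le_csSup hDbdd ⟨x, y, h, rfl⟩
  have hL0 : 0 ≤ L := by
    by_cases hDne : D.Nonempty
    · obtain ⟨d, x, y, hxy, hd⟩ := hDne
      exact le_trans (hd ▸ abs_nonneg _) (le_csSup hDbdd ⟨x, y, hxy, hd⟩)
    · rw [Set.not_nonempty_iff_eq_empty] at hDne
      rw [hLdef, hDne, Real.sSup_empty]
  have hlip : ∀ x y : V, |f x - f y| ≤ L * (G.dist x y : ℝ) := by
    intro x y
    obtain ⟨pw, hpw⟩ := hconn.exists_walk_length_eq_dist x y
    rw [← hpw]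
    exact walk_lip G f L hL pw
  -- the feasible-cost set
  set S := { c : ℝ | ∃ γ : V → V → ℝ, (∀ x y, 0 ≤ γ x y) ∧
    (∀ x, ∑ y, γ x y = p x) ∧ (∀ y, ∑ x, γ x y = q y) ∧
    c = ∑ x, ∑ y, γ x y * (G.dist x y : ℝ) } with hS
  have hW1 : W1 G p q = sInf S := rfl
  have hSne : S.Nonempty := by
    refine ⟨∑ x, ∑ y, (p x * q y) * (G.dist x y : ℝ), fun x y => p x * q y,
      fun x y => mul_nonneg (hpnn x) (hqnn y), ?_, ?_, rfl⟩
    · intro x; rw [← Finset.mul_sum, hqsum, mul_one]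
    · intro y; rw [← Finset.sum_mul, hpsum, one_mul]
  -- key bound against any coupling
  have key : ∀ c ∈ S, |∑ y, q y * f y - ∑ x, p x * f x| ≤ c * L := by
    rintro c ⟨γ, hγ0, hγp, hγq, hc⟩
    have e1 : ∑ x, p x * f x = ∑ x, ∑ y, γ x y * f x := by
      refine Finset.sum_congr rfl fun x _ => ?_
      rw [← hγp x, Finset.sum_mul]
    have e2 : ∑ y, q y * f y = ∑ x, ∑ y, γ x y * f y := by
      rw [Finset.sum_comm]
      refine Finset.sum_congr rfl fun y _ => ?_
      rw [← hγq y, Finset.sum_mul]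
    calc |∑ y, q y * f y - ∑ x, p x * f x|
        = |∑ x, ∑ y, γ x y * (f y - f x)| := by
          rw [e1, e2, ← Finset.sum_sub_distrib]
          congr 1
          refine Finset.sum_congr rfl fun x _ => ?_
          rw [← Finset.sum_sub_distrib]
          refine Finset.sum_congr rfl fun y _ => ?_
          ring
      _ ≤ ∑ x, ∑ y, |γ x y * (f y - f x)| := by
          refine le_trans (Finset.abs_sum_le_sum_abs _ _) ?_
          exact Finset.sum_le_sum fun x _ => Finset.abs_sum_le_sum_abs _ _
      _ ≤ ∑ x, ∑ y, γ x y * (L * (G.dist x y : ℝ)) := by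
          refine Finset.sum_le_sum fun x _ => Finset.sum_le_sum fun y _ => ?_
          rw [abs_mul, abs_of_nonneg (hγ0 x y)]
          refine mul_le_mul_of_nonneg_left ?_ (hγ0 x y)
          calc |f y - f x| ≤ L * (G.dist y x : ℝ) := hlip y x
            _ = L * (G.dist x y : ℝ) := by rw [SimpleGraph.dist_comm]
      _ = (∑ x, ∑ y, γ x y * (G.dist x y : ℝ)) * L := by
          rw [Finset.sum_mul]
          refine Finset.sum_congr rfl fun x _ => ?_
          rw [Finset.sum_mul]
          refine Finset.sum_congr rfl fun y _ => ?_
          ring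
      _ = c * L := by rw [hc]
  -- conclude
  rw [← hA, ← hB, hW1]
  rcases hL0.eq_or_lt with h0 | h0
  · obtain ⟨c, hc⟩ := hSne
    have := key c hc
    rw [← h0, mul_zero] at this ⊢
    exact this
  · have h1 : |∑ y, q y * f y - ∑ x, p x * f x| / L ≤ sInf S :=
      le_csInf hSne fun c hc => (div_le_iff₀ h0).mpr (key c hc)
    calc |∑ y, q y * f y - ∑ x, p x * f x|
        = |∑ y, q y * f y - ∑ x, p x * f x| / L * L := by field_simp
      _ ≤ sInf S * L := mul_le_mul_of_nonneg_right h1 h0.le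
end

section
/- Fix α ∈ (0,1). Let (x_j)_{j≥1} be a sequence of vertices such that for every k ≥ 1 the vertex x_{k+1} minimizes the function ((−Δ)^{−2α}(Σ_{j=1}^{k} δ_{x_j}))(·) over all vertices, i.e. ((−Δ)^{−2α} Σ_{j=1}^{k} δ_{x_j})(x_{k+1}) ≤ ((−Δ)^{−2α} Σ_{j=1}^{k} δ_{x_j})(y) for all y ∈ V. Let μ_k = (1/k)·Σ_{j=1}^{k} δ_{x_j}. Then for all 1 ≤ k ≤ n: Σ_{i=2}^{n} |⟨μ_k, φ_i⟩|² / λ_i^{2α} ≤ (max_{1≤j≤k} ‖(−Δ)^{−α}(δ_{x_j})‖²_{L²}) · k^{−1}, where ‖v‖²_{L²} = Σ_{x∈V} v(x)². -/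
open Finset

/-- The negative fractional Laplacian `(-Δ)^{-β}` determined by an orthonormal
eigenbasis `φ₁,…,φₙ` (indexed by `Fin n`, with `φ₀` the constant eigenvector,
which is skipped) and eigenvalues `lam`:
`(-Δ)^{-β} v = ∑_{i ≠ 0} ⟨v, φ i⟩ (lam i)^{-β} φ i`. -/
noncomputable def invLap {V : Type*} [Fintype V] {n : ℕ}
    (φ : Fin n → V → ℝ) (lam : Fin n → ℝ) (β : ℝ) (v : V → ℝ) : V → ℝ :=
  fun x => ∑ i ∈ Finset.univ.filter (fun i : Fin n => i.val ≠ 0),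
    (∑ y, v y * φ i y) * (lam i ^ (-β)) * φ i x

lemma expandA {V : Type*} [Fintype V] {n : ℕ} (φ : Fin n → V → ℝ)
    (horth : ∀ i j, ∑ x, φ i x * φ j x = if i = j then (1:ℝ) else 0)
    (s : Finset (Fin n)) (a : Fin n → ℝ) :
    ∑ z, (∑ i ∈ s, a i * φ i z)^2 = ∑ i ∈ s, (a i)^2 := by
  have h1 : ∀ z, (∑ i ∈ s, a i * φ i z)^2
      = ∑ i ∈ s, ∑ j ∈ s, (a i * a j) * (φ i z * φ j z) := by
    intro z
    rw [sq, Finset.sum_mul_sum]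
    exact Finset.sum_congr rfl fun i _ => Finset.sum_congr rfl fun j _ => by ring
  simp_rw [h1]
  rw [Finset.sum_comm]
  refine Finset.sum_congr rfl fun i hi => ?_
  rw [Finset.sum_comm]
  have : ∀ j ∈ s, ∑ z, (a i * a j) * (φ i z * φ j z)
      = (a i * a j) * (if i = j then (1:ℝ) else 0) := by
    intro j _
    rw [← Finset.mul_sum, horth]
  rw [Finset.sum_congr rfl this]
  simp_rw [mul_ite, mul_one, mul_zero]
  rw [Finset.sum_ite_eq s i (fun j => a i * a j), if_pos hi, sq]

lemma deltaCoef {V : Type*} [Fintype V] [DecidableEq V] {n : ℕ} (φ : Fin n → V → ℝ)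
    (w : V) (i : Fin n) :
    ∑ y, (if y = w then (1:ℝ) else 0) * φ i y = φ i w := by
  simp [ite_mul]

/-- theoretical guarantee for the greedy algorithm.  If each
`x_{k+1}` minimizes `(-Δ)^{-2α}(∑_{j=1}^k δ_{x_j})` over the vertices, then for
`1 ≤ k ≤ n` the measure `μ_k = k⁻¹ ∑_{j=1}^k δ_{x_j}` satisfies
`∑_{i=2}^n |⟨μ_k, φ_i⟩|²/λ_i^{2α} ≤ (max_{j ≤ k} ‖(-Δ)^{-α} δ_{x_j}‖²) / k`. -/
theorem stmt1 {V : Type*} [Fintype V] [DecidableEq V] (G : SimpleGraph V)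
    [DecidableRel G.Adj] (hconn : G.Connected)
    (dreg : ℕ) (hreg : G.IsRegularOfDegree dreg)
    (n : ℕ) (hn : n = Fintype.card V)
    (φ : Fin n → V → ℝ) (lam : Fin n → ℝ)
    (horth : ∀ i j, ∑ x, φ i x * φ j x = if i = j then (1 : ℝ) else 0)
    (heig : ∀ i x, φ i x - (1 / (dreg : ℝ)) * ∑ y ∈ G.neighborFinset x, φ i y
      = lam i * φ i x)
    (hmono : Monotone lam)
    (hlam0 : ∀ i : Fin n, i.val = 0 → lam i = 0)
    (hlampos : ∀ i : Fin n, i.val ≠ 0 → 0 < lam i)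
    (hconst : ∀ i : Fin n, i.val = 0 → ∀ x, φ i x = (n : ℝ) ^ (-(1 / 2) : ℝ))
    (α : ℝ) (hα0 : 0 < α) (hα1 : α < 1)
    (x : ℕ → V)
    (hmin : ∀ k, 1 ≤ k → ∀ y : V,
      invLap φ lam (2 * α)
          (fun z => ∑ j ∈ Finset.Icc 1 k, if z = x j then (1 : ℝ) else 0) (x (k + 1))
        ≤ invLap φ lam (2 * α)
          (fun z => ∑ j ∈ Finset.Icc 1 k, if z = x j then (1 : ℝ) else 0) y)
    (k : ℕ) (hk1 : 1 ≤ k) (hkn : k ≤ n) :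
    ∑ i ∈ Finset.univ.filter (fun i : Fin n => i.val ≠ 0),
      (∑ y, ((1 / (k : ℝ)) * ∑ j ∈ Finset.Icc 1 k, if y = x j then (1 : ℝ) else 0)
          * φ i y) ^ 2 / lam i ^ (2 * α)
      ≤ (Finset.sup' (Finset.Icc 1 k) (Finset.nonempty_Icc.mpr hk1)
          (fun j => ∑ z,
            (invLap φ lam α (fun w => if w = x j then (1 : ℝ) else 0) z) ^ 2))
          * (k : ℝ)⁻¹ := by
  classical
  have hV : Nonempty V := hconn.nonempty
  have hcardV : 0 < Fintype.card V := Fintype.card_pos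
  have hn0 : 0 < n := hn ▸ hcardV
  set s : Finset (Fin n) := Finset.univ.filter (fun i : Fin n => i.val ≠ 0) with hs
  have hmem : ∀ i : Fin n, i ∈ s ↔ i.val ≠ 0 := by
    intro i; simp [hs]
  -- the index 0 eigenvector
  set i0 : Fin n := ⟨0, hn0⟩ with hi0
  -- eigenvectors with nonzero index sum to zero
  have hsum0 : ∀ i ∈ s, ∑ y, φ i y = 0 := by
    intro i hi
    have hine : i ≠ i0 := by
      intro h
      exact ((hmem i).1 hi) (by rw [h])
    have h0 := horth i i0
    rw [if_neg hine] at h0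
    have hc : ∀ y : V, φ i0 y = (n : ℝ) ^ (-(1 / 2) : ℝ) := hconst i0 rfl
    have hcpos : (0:ℝ) < (n : ℝ) ^ (-(1 / 2) : ℝ) :=
      Real.rpow_pos_of_pos (by exact_mod_cast hn0) _
    simp_rw [hc] at h0
    rw [← Finset.sum_mul] at h0
    exact (mul_eq_zero.1 h0).resolve_right (ne_of_gt hcpos)
  -- coefficients of the sum of deltas
  have cS : ∀ (m : ℕ) (i : Fin n),
      (∑ y, (∑ j ∈ Finset.Icc 1 m, if y = x j then (1:ℝ) else 0) * φ i y)
        = ∑ j ∈ Finset.Icc 1 m, φ i (x j) := by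
    intro m i
    simp_rw [Finset.sum_mul]
    rw [Finset.sum_comm]
    exact Finset.sum_congr rfl fun j _ => deltaCoef φ (x j) i
  -- energies
  set Ed : ℕ → ℝ := fun j => ∑ i ∈ s, (φ i (x j))^2 * lam i ^ (-(2*α)) with hEd
  set E : ℕ → ℝ := fun m =>
    ∑ i ∈ s, (∑ j ∈ Finset.Icc 1 m, φ i (x j))^2 * lam i ^ (-(2*α)) with hE
  -- the minimality of x (m+1) forces nonpositive correlation
  have hcorr : ∀ m : ℕ, 1 ≤ m →
      (∑ i ∈ s, (∑ j ∈ Finset.Icc 1 m, φ i (x j)) * lam i ^ (-(2*α)) * φ i (x (m+1)))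
        ≤ 0 := by
    intro m hm
    have hsumy : ∑ y, invLap φ lam (2 * α)
        (fun z => ∑ j ∈ Finset.Icc 1 m, if z = x j then (1:ℝ) else 0) y = 0 := by
      unfold invLap
      rw [Finset.sum_comm]
      refine Finset.sum_eq_zero fun i hi => ?_
      rw [← Finset.mul_sum, hsum0 i hi, mul_zero]
    have hle : ∀ y ∈ (Finset.univ : Finset V),
        invLap φ lam (2 * α)
          (fun z => ∑ j ∈ Finset.Icc 1 m, if z = x j then (1:ℝ) else 0) (x (m+1))
        ≤ invLap φ lam (2 * α)
          (fun z => ∑ j ∈ Finset.Icc 1 m, if z = x j then (1:ℝ) else 0) y :=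
      fun y _ => hmin m hm y
    have hsumle := Finset.sum_le_sum hle
    rw [Finset.sum_const, hsumy, Finset.card_univ, nsmul_eq_mul] at hsumle
    have hval : invLap φ lam (2 * α)
        (fun z => ∑ j ∈ Finset.Icc 1 m, if z = x j then (1:ℝ) else 0) (x (m+1)) ≤ 0 := by
      by_contra hpos
      push_neg at hpos
      have : (0:ℝ) < (Fintype.card V : ℝ) * _ := mul_pos (by exact_mod_cast hcardV) hpos
      linarith [this]
    calc (∑ i ∈ s, (∑ j ∈ Finset.Icc 1 m, φ i (x j)) * lam i ^ (-(2*α)) * φ i (x (m+1)))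
        = invLap φ lam (2 * α)
          (fun z => ∑ j ∈ Finset.Icc 1 m, if z = x j then (1:ℝ) else 0) (x (m+1)) := by
          unfold invLap
          exact Finset.sum_congr rfl fun i _ => by rw [cS m i]
      _ ≤ 0 := hval
  -- main induction
  have key : ∀ m : ℕ, 1 ≤ m → E m ≤ ∑ j ∈ Finset.Icc 1 m, Ed j := by
    intro m hm
    induction m, hm using Nat.le_induction with
    | base => simp [hE, hEd]
    | succ m hm ih =>
      have hins : Finset.Icc 1 (m+1) = insert (m+1) (Finset.Icc 1 m) := by
        exact (Finset.insert_Icc_right_eq_Icc_add_one (by omega)).symm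
      have hsplit : E (m+1) = E m
          + 2 * (∑ i ∈ s, (∑ j ∈ Finset.Icc 1 m, φ i (x j)) * lam i ^ (-(2*α)) * φ i (x (m+1)))
          + Ed (m+1) := by
        simp only [hE, hEd]
        rw [Finset.mul_sum, ← Finset.sum_add_distrib, ← Finset.sum_add_distrib]
        refine Finset.sum_congr rfl fun i _ => ?_
        rw [hins, Finset.sum_insert (by simp)]
        ring
      have := hcorr m hm
      calc E (m+1) ≤ E m + Ed (m+1) := by rw [hsplit]; linarith
        _ ≤ (∑ j ∈ Finset.Icc 1 m, Ed j) + Ed (m+1) := by linarith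
        _ = ∑ j ∈ Finset.Icc 1 (m+1), Ed j := by
            rw [hins, Finset.sum_insert (by simp)]; ring
  -- identify Ed with the norm of invLap applied to delta
  have hEdnorm : ∀ j : ℕ,
      (∑ z, (invLap φ lam α (fun w => if w = x j then (1:ℝ) else 0) z) ^ 2) = Ed j := by
    intro j
    have hfun : ∀ z, invLap φ lam α (fun w => if w = x j then (1:ℝ) else 0) z
        = ∑ i ∈ s, (φ i (x j) * lam i ^ (-α)) * φ i z := by
      intro z
      unfold invLap
      exact Finset.sum_congr rfl fun i _ => by rw [deltaCoef φ (x j) i]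
    simp_rw [hfun]
    rw [expandA φ horth s (fun i => φ i (x j) * lam i ^ (-α))]
    refine Finset.sum_congr rfl fun i hi => ?_
    have hpos := hlampos i ((hmem i).1 hi)
    rw [mul_pow, sq (lam i ^ (-α)), ← Real.rpow_add hpos]
    ring_nf
  -- the sup bound
  set M : ℝ := Finset.sup' (Finset.Icc 1 k) (Finset.nonempty_Icc.mpr hk1)
      (fun j => ∑ z, (invLap φ lam α (fun w => if w = x j then (1:ℝ) else 0) z) ^ 2)
    with hM
  have hEdM : ∀ j ∈ Finset.Icc 1 k, Ed j ≤ M := by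
    intro j hj
    rw [← hEdnorm j]
    exact Finset.le_sup'
      (fun j => ∑ z, (invLap φ lam α (fun w => if w = x j then (1:ℝ) else 0) z) ^ 2) hj
  have hsumM : ∑ j ∈ Finset.Icc 1 k, Ed j ≤ (k : ℝ) * M := by
    calc ∑ j ∈ Finset.Icc 1 k, Ed j ≤ ∑ j ∈ Finset.Icc 1 k, M :=
          Finset.sum_le_sum hEdM
      _ = (k : ℝ) * M := by rw [Finset.sum_const, Nat.card_Icc]; simp [nsmul_eq_mul]
  have hEk : E k ≤ (k : ℝ) * M := le_trans (key k hk1) hsumM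
  -- rewrite the goal LHS as (1/k)^2 * E k
  have hk0 : (0:ℝ) < (k:ℝ) := by exact_mod_cast hk1
  have hLHS : ∑ i ∈ s,
      (∑ y, ((1 / (k : ℝ)) * ∑ j ∈ Finset.Icc 1 k, if y = x j then (1:ℝ) else 0)
          * φ i y) ^ 2 / lam i ^ (2 * α)
      = (1 / (k:ℝ))^2 * E k := by
    rw [hE, Finset.mul_sum]
    refine Finset.sum_congr rfl fun i hi => ?_
    have hpos := hlampos i ((hmem i).1 hi)
    have hcoef : (∑ y, ((1 / (k : ℝ)) * ∑ j ∈ Finset.Icc 1 k, if y = x j then (1:ℝ) else 0)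
        * φ i y) = (1 / (k:ℝ)) * ∑ j ∈ Finset.Icc 1 k, φ i (x j) := by
      rw [← cS k i, Finset.mul_sum]
      exact Finset.sum_congr rfl fun y _ => by ring
    rw [hcoef, Real.rpow_neg hpos.le, div_eq_mul_inv]
    ring
  rw [hLHS]
  calc (1 / (k:ℝ))^2 * E k ≤ (1 / (k:ℝ))^2 * ((k:ℝ) * M) := by
        apply mul_le_mul_of_nonneg_left hEk (by positivity)
    _ = M * (k:ℝ)⁻¹ := by field_simp
end

section
/- Let G=(V,E) be a finite connected simple graph with no isolated vertices, and let L = Id − A D^{-1}. Suppose φ : V → ℝ is a nonzero vector with Lφ = λφ where 0 < λ < 2. Then W₁(φ⁺, φ⁻) ≤ (1/(1 − |1 − λ|)) · ‖φ‖_{ℓ¹}, where φ⁺ and φ⁻ are the positive and negative parts of φ (which have equal total mass) and ‖φ‖_{ℓ¹} = Σ_{x∈V} |φ(x)|. -/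
open Finset

section helpers

open scoped Classical

variable {V : Type*} [Fintype V] (G : SimpleGraph V)

def cpl (p q : V → ℝ) : Set ℝ :=
  { c : ℝ | ∃ γ : V → V → ℝ, (∀ x y, 0 ≤ γ x y) ∧
    (∀ x, ∑ y, γ x y = p x) ∧ (∀ y, ∑ x, γ x y = q y) ∧
    c = ∑ x, ∑ y, γ x y * (G.dist x y : ℝ) }

lemma W1_eq (p q : V → ℝ) : W1 G p q = sInf (cpl G p q) := rfl

lemma cpl_nonneg {p q : V → ℝ} {c : ℝ} (hc : c ∈ cpl G p q) : 0 ≤ c := by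
  obtain ⟨γ, h0, -, -, rfl⟩ := hc
  exact Finset.sum_nonneg fun x _ => Finset.sum_nonneg fun y _ =>
    mul_nonneg (h0 x y) (Nat.cast_nonneg _)

lemma bddBelow_cpl (p q : V → ℝ) : BddBelow (cpl G p q) :=
  ⟨0, fun c hc => cpl_nonneg G hc⟩

lemma cpl_nonempty {p q : V → ℝ} (hp : ∀ x, 0 ≤ p x) (hq : ∀ x, 0 ≤ q x)
    (hm : ∑ x, p x = ∑ x, q x) : (cpl G p q).Nonempty := by
  by_cases h0 : ∑ x, p x = 0
  · have hp0 : ∀ x, p x = 0 := fun x =>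
      (Finset.sum_eq_zero_iff_of_nonneg (fun i _ => hp i)).1 h0 x (mem_univ x)
    have hq0 : ∀ x, q x = 0 := fun x =>
      (Finset.sum_eq_zero_iff_of_nonneg (fun i _ => hq i)).1 (hm ▸ h0) x (mem_univ x)
    refine ⟨0, (fun _ _ => 0), fun _ _ => le_refl 0,
      fun x => by simp [hp0 x], fun y => by simp [hq0 y], by simp⟩
  · refine ⟨_, fun x y => p x * q y / (∑ x, p x), fun x y =>
      div_nonneg (mul_nonneg (hp x) (hq y)) (Finset.sum_nonneg fun i _ => hp i), ?_, ?_, rfl⟩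
    · intro x
      rw [← Finset.sum_div, ← Finset.mul_sum, ← hm, mul_div_assoc, div_self h0, mul_one]
    · intro y
      rw [← Finset.sum_div, ← Finset.sum_mul, mul_comm, mul_div_assoc, div_self h0, mul_one]

lemma W1_le_cost {p q : V → ℝ} (γ : V → V → ℝ) (h0 : ∀ x y, 0 ≤ γ x y)
    (h1 : ∀ x, ∑ y, γ x y = p x) (h2 : ∀ y, ∑ x, γ x y = q y) :
    W1 G p q ≤ ∑ x, ∑ y, γ x y * (G.dist x y : ℝ) :=
  csInf_le (bddBelow_cpl G p q) ⟨γ, h0, h1, h2, rfl⟩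

lemma W1_nonneg {p q : V → ℝ} (hne : (cpl G p q).Nonempty) : 0 ≤ W1 G p q :=
  le_csInf hne fun _ hc => cpl_nonneg G hc


lemma W1_triangle (hconn : G.Connected) {p r q : V → ℝ}
    (hp : ∀ x, 0 ≤ p x) (hr : ∀ x, 0 ≤ r x) (hq : ∀ x, 0 ≤ q x)
    (hpr : ∑ x, p x = ∑ x, r x) (hrq : ∑ x, r x = ∑ x, q x) :
    W1 G p q ≤ W1 G p r + W1 G r q := by
  have n1 := cpl_nonempty G hp hr hpr
  have n2 := cpl_nonempty G hr hq hrq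
  have key : ∀ c₁ ∈ cpl G p r, ∀ c₂ ∈ cpl G r q, W1 G p q ≤ c₁ + c₂ := by
    rintro c₁ ⟨γ₁, h10, h1p, h1r, rfl⟩ c₂ ⟨γ₂, h20, h2r, h2q, rfl⟩
    set t : V → V → V → ℝ :=
      fun x y z => if r y = 0 then 0 else γ₁ x y * γ₂ y z / r y with ht
    have hz1 : ∀ y, r y = 0 → ∀ x, γ₁ x y = 0 := by
      intro y hy x
      have h := h1r y
      rw [hy] at h
      exact (Finset.sum_eq_zero_iff_of_nonneg (fun i _ => h10 i y)).1 h x (mem_univ x)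
    have hz2 : ∀ y, r y = 0 → ∀ z, γ₂ y z = 0 := by
      intro y hy z
      have h := h2r y
      rw [hy] at h
      exact (Finset.sum_eq_zero_iff_of_nonneg (fun i _ => h20 y i)).1 h z (mem_univ z)
    have ht0 : ∀ x y z, 0 ≤ t x y z := by
      intro x y z
      simp only [ht]
      split_ifs with hy
      · exact le_refl 0
      · exact div_nonneg (mul_nonneg (h10 x y) (h20 y z)) (hr y)
    have hsum_z : ∀ x y, ∑ z, t x y z = γ₁ x y := by
      intro x y
      by_cases hy : r y = 0
      · simp [ht, hy, hz1 y hy x]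
      · simp only [ht, if_neg hy]
        rw [← Finset.sum_div, ← Finset.mul_sum, h2r y, mul_div_assoc, div_self hy, mul_one]
    have hsum_x : ∀ y z, ∑ x, t x y z = γ₂ y z := by
      intro y z
      by_cases hy : r y = 0
      · simp [ht, hy, hz2 y hy z]
      · simp only [ht, if_neg hy]
        rw [← Finset.sum_div, ← Finset.sum_mul, h1r y, mul_comm, mul_div_assoc,
          div_self hy, mul_one]
    have hle := W1_le_cost G (p := p) (q := q) (fun x z => ∑ y, t x y z) (fun x z =>
        Finset.sum_nonneg fun y _ => ht0 x y z)
      (fun x => by rw [Finset.sum_comm]; simp_rw [hsum_z]; exact h1p x)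
      (fun z => by rw [Finset.sum_comm]; simp_rw [hsum_x]; exact h2q z)
    refine hle.trans ?_
    have hbound : ∑ x, ∑ z, (∑ y, t x y z) * (G.dist x z : ℝ) ≤
        ∑ x, ∑ z, ∑ y, t x y z * ((G.dist x y : ℝ) + (G.dist y z : ℝ)) := by
      refine Finset.sum_le_sum fun x _ => Finset.sum_le_sum fun z _ => ?_
      rw [Finset.sum_mul]
      refine Finset.sum_le_sum fun y _ => ?_
      refine mul_le_mul_of_nonneg_left ?_ (ht0 x y z)
      have := hconn.dist_triangle (u := x) (v := y) (w := z)
      exact_mod_cast this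
    refine hbound.trans (le_of_eq ?_)
    have e1 : ∑ x, ∑ z, ∑ y, t x y z * (G.dist x y : ℝ)
        = ∑ x, ∑ y, γ₁ x y * (G.dist x y : ℝ) := by
      refine Finset.sum_congr rfl fun x _ => ?_
      rw [Finset.sum_comm]
      refine Finset.sum_congr rfl fun y _ => ?_
      rw [← Finset.sum_mul, hsum_z]
    have e2 : ∑ x, ∑ z, ∑ y, t x y z * (G.dist y z : ℝ)
        = ∑ y, ∑ z, γ₂ y z * (G.dist y z : ℝ) := by
      calc ∑ x, ∑ z, ∑ y, t x y z * (G.dist y z : ℝ)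
          = ∑ z, ∑ y, (∑ x, t x y z) * (G.dist y z : ℝ) := by
            rw [Finset.sum_comm]
            refine Finset.sum_congr rfl fun z _ => ?_
            rw [Finset.sum_comm]
            exact Finset.sum_congr rfl fun y _ => (Finset.sum_mul _ _ _).symm
        _ = ∑ z, ∑ y, γ₂ y z * (G.dist y z : ℝ) := by simp_rw [hsum_x]
        _ = ∑ y, ∑ z, γ₂ y z * (G.dist y z : ℝ) := Finset.sum_comm
    simp_rw [mul_add, Finset.sum_add_distrib]
    rw [e1, e2]
  have step1 : ∀ c₁ ∈ cpl G p r, W1 G p q - c₁ ≤ W1 G r q := by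
    intro c₁ hc₁
    rw [W1_eq G r q]
    refine le_csInf n2 fun c₂ hc₂ => ?_
    have := key c₁ hc₁ c₂ hc₂
    linarith
  have step2 : W1 G p q - W1 G r q ≤ W1 G p r := by
    rw [W1_eq G p r]
    refine le_csInf n1 fun c₁ hc₁ => ?_
    have := step1 c₁ hc₁
    linarith
  linarith

lemma le_sInf_add_sInf {S₁ S₂ : Set ℝ} (n₁ : S₁.Nonempty) (n₂ : S₂.Nonempty) {a : ℝ}
    (h : ∀ c₁ ∈ S₁, ∀ c₂ ∈ S₂, a ≤ c₁ + c₂) : a ≤ sInf S₁ + sInf S₂ := by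
  have step1 : ∀ c₁ ∈ S₁, a - c₁ ≤ sInf S₂ := fun c₁ hc₁ =>
    le_csInf n₂ fun c₂ hc₂ => by linarith [h c₁ hc₁ c₂ hc₂]
  have step2 : a - sInf S₂ ≤ sInf S₁ :=
    le_csInf n₁ fun c₁ hc₁ => by linarith [step1 c₁ hc₁]
  linarith

lemma W1_add_le {p₁ q₁ p₂ q₂ : V → ℝ}
    (hp₁ : ∀ x, 0 ≤ p₁ x) (hq₁ : ∀ x, 0 ≤ q₁ x) (hp₂ : ∀ x, 0 ≤ p₂ x) (hq₂ : ∀ x, 0 ≤ q₂ x)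
    (hm₁ : ∑ x, p₁ x = ∑ x, q₁ x) (hm₂ : ∑ x, p₂ x = ∑ x, q₂ x) :
    W1 G (fun x => p₁ x + p₂ x) (fun x => q₁ x + q₂ x) ≤ W1 G p₁ q₁ + W1 G p₂ q₂ := by
  rw [W1_eq G p₁ q₁, W1_eq G p₂ q₂]
  refine le_sInf_add_sInf (cpl_nonempty G hp₁ hq₁ hm₁) (cpl_nonempty G hp₂ hq₂ hm₂) ?_
  rintro c₁ ⟨γ₁, h10, h1p, h1q, rfl⟩ c₂ ⟨γ₂, h20, h2p, h2q, rfl⟩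
  refine (W1_le_cost G (p := fun x => p₁ x + p₂ x) (q := fun x => q₁ x + q₂ x)
    (fun x y => γ₁ x y + γ₂ x y)
    (fun x y => add_nonneg (h10 x y) (h20 x y))
    (fun x => by rw [Finset.sum_add_distrib, h1p x, h2p x])
    (fun y => by rw [Finset.sum_add_distrib, h1q y, h2q y])).trans (le_of_eq ?_)
  simp_rw [add_mul, Finset.sum_add_distrib]

lemma W1_smul_le {p q : V → ℝ} {c : ℝ} (hc : 0 ≤ c)
    (hp : ∀ x, 0 ≤ p x) (hq : ∀ x, 0 ≤ q x) (hm : ∑ x, p x = ∑ x, q x) :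
    W1 G (fun x => c * p x) (fun x => c * q x) ≤ c * W1 G p q := by
  rcases hc.eq_or_lt with rfl | hc
  · rw [zero_mul]
    refine (W1_le_cost G (p := fun x => 0 * p x) (q := fun x => 0 * q x) (fun _ _ => 0)
      (fun _ _ => le_refl 0) (fun x => by simp) (fun y => by simp)).trans (le_of_eq ?_)
    simp
  · have key : ∀ d ∈ cpl G p q, W1 G (fun x => c * p x) (fun x => c * q x) ≤ c * d := by
      rintro d ⟨γ, h0, h1, h2, rfl⟩
      refine (W1_le_cost G (p := fun x => c * p x) (q := fun x => c * q x)
        (fun x y => c * γ x y) (fun x y => mul_nonneg hc.le (h0 x y))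
        (fun x => by rw [← Finset.mul_sum, h1 x])
        (fun y => by rw [← Finset.mul_sum, h2 y])).trans (le_of_eq ?_)
      simp_rw [Finset.mul_sum, mul_assoc]
    have h2 : W1 G (fun x => c * p x) (fun x => c * q x) / c ≤ sInf (cpl G p q) :=
      le_csInf (cpl_nonempty G hp hq hm) fun d hd =>
        (div_le_iff₀ hc).2 (by rw [mul_comm]; exact key d hd)
    rw [W1_eq G p q] at *
    calc W1 G (fun x => c * p x) (fun x => c * q x)
        = c * (W1 G (fun x => c * p x) (fun x => c * q x) / c) := by field_simp
      _ ≤ c * sInf (cpl G p q) := by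
          exact mul_le_mul_of_nonneg_left h2 hc.le

lemma W1_self_nonpos {p : V → ℝ} (hp : ∀ x, 0 ≤ p x) : W1 G p p ≤ 0 := by
  have hd : ∀ x y : V, (if x = y then p x else 0) * (G.dist x y : ℝ) = 0 := by
    intro x y
    split_ifs with h
    · subst h; simp [SimpleGraph.dist_self]
    · rw [zero_mul]
  refine (W1_le_cost G (p := p) (q := p) (fun x y => if x = y then p x else 0)
    (fun x y => by by_cases h : x = y <;> simp [h, hp x, hp y])
    (fun x => by simp)
    (fun y => by simp)).trans (le_of_eq ?_)
  simp [hd]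

lemma W1_symm_le {p q : V → ℝ} (hp : ∀ x, 0 ≤ p x) (hq : ∀ x, 0 ≤ q x)
    (hm : ∑ x, p x = ∑ x, q x) : W1 G q p ≤ W1 G p q := by
  rw [W1_eq G p q]
  refine le_csInf (cpl_nonempty G hp hq hm) ?_
  rintro c ⟨γ, h0, h1, h2, rfl⟩
  refine (W1_le_cost G (p := q) (q := p) (fun x y => γ y x) (fun x y => h0 y x)
    h2 h1).trans (le_of_eq ?_)
  rw [Finset.sum_comm]
  exact Finset.sum_congr rfl fun a _ => Finset.sum_congr rfl fun b _ => by
    rw [SimpleGraph.dist_comm]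

variable [DecidableRel G.Adj]

lemma sum_nbr (h : V → ℝ) :
    ∑ x, ∑ y ∈ G.neighborFinset x, h y = ∑ y, (G.degree y : ℝ) * h y := by
  have e : ∀ x, ∑ y ∈ G.neighborFinset x, h y
      = ∑ y, if y ∈ G.neighborFinset x then h y else 0 := fun x => by
    rw [Finset.sum_ite_mem, univ_inter]
  simp_rw [e]
  rw [Finset.sum_comm]
  refine Finset.sum_congr rfl fun y _ => ?_
  have e2 : ∀ x, (if y ∈ G.neighborFinset x then h y else 0)
      = (if x ∈ G.neighborFinset y then h y else 0) := fun x =>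
    if_congr (by simp only [SimpleGraph.mem_neighborFinset]; exact G.adj_comm x y) rfl rfl
  simp_rw [e2]
  rw [Finset.sum_ite_mem, univ_inter, Finset.sum_const,
    SimpleGraph.card_neighborFinset_eq_degree, nsmul_eq_mul]

lemma W1_step (hdeg : ∀ x, 0 < G.degree x) {p : V → ℝ} (hp : ∀ x, 0 ≤ p x) :
    W1 G p (fun x => ∑ y ∈ G.neighborFinset x, p y / (G.degree y : ℝ)) ≤ ∑ x, p x := by
  have hdeg' : ∀ x, ((G.degree x : ℝ)) ≠ 0 := fun x => (Nat.cast_pos.2 (hdeg x)).ne'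
  set γ : V → V → ℝ := fun x y =>
    if y ∈ G.neighborFinset x then p x / (G.degree x : ℝ) else 0 with hγ
  have hrow : ∀ x, ∑ y, γ x y = p x := by
    intro x
    rw [hγ]
    simp only
    rw [Finset.sum_ite_mem, univ_inter, Finset.sum_const,
      SimpleGraph.card_neighborFinset_eq_degree, nsmul_eq_mul, mul_comm,
      div_mul_cancel₀ _ (hdeg' x)]
  have hcol : ∀ y, ∑ x, γ x y = ∑ z ∈ G.neighborFinset y, p z / (G.degree z : ℝ) := by
    intro y
    have e2 : ∀ x, γ x y = (if x ∈ G.neighborFinset y then p x / (G.degree x : ℝ) else 0) :=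
      fun x => if_congr (by simp only [SimpleGraph.mem_neighborFinset]; exact G.adj_comm x y)
        rfl rfl
    simp_rw [e2]
    rw [Finset.sum_ite_mem, univ_inter]
  refine (W1_le_cost G (p := p)
    (q := fun x => ∑ y ∈ G.neighborFinset x, p y / (G.degree y : ℝ)) γ
    (fun x y => by rw [hγ]; dsimp only; split_ifs
                   exacts [div_nonneg (hp x) (Nat.cast_nonneg _), le_refl 0])
    hrow hcol).trans (le_of_eq ?_)
  refine Finset.sum_congr rfl fun x _ => ?_
  have : ∀ y, γ x y * (G.dist x y : ℝ) = γ x y := by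
    intro y
    rw [hγ]
    dsimp only
    split_ifs with h
    · rw [SimpleGraph.dist_eq_one_iff_adj.2 ((SimpleGraph.mem_neighborFinset _ _ _).1 h)]
      norm_num
    · rw [zero_mul]
  simp_rw [this]
  exact hrow x

end helpers


set_option maxHeartbeats 1000000 in
/-- spectral bound on the transport distance between the positive
and negative parts of an eigenvector of `L = Id - A D⁻¹` with eigenvalue
`0 < λ < 2`:  `W₁(φ⁺, φ⁻) ≤ ‖φ‖₁ / (1 - |1 - λ|)`. -/
theorem stmt4 {V : Type*} [Fintype V] (G : SimpleGraph V) [DecidableRel G.Adj]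
    (hconn : G.Connected) (hdeg : ∀ x, 0 < G.degree x)
    (φ : V → ℝ) (hφ : φ ≠ 0) (lam : ℝ) (hlam0 : 0 < lam) (hlam2 : lam < 2)
    (heig : ∀ x, φ x - ∑ y ∈ G.neighborFinset x, φ y / (G.degree y : ℝ) = lam * φ x) :
    W1 G (fun x => max (φ x) 0) (fun x => max (-φ x) 0) ≤
      (1 / (1 - |1 - lam|)) * ∑ x, |φ x| := by
  classical
  have hdeg' : ∀ x, ((G.degree x : ℝ)) ≠ 0 := fun x => (Nat.cast_pos.2 (hdeg x)).ne'
  set fp : V → ℝ := fun x => max (φ x) 0 with hfp_def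
  set fm : V → ℝ := fun x => max (-φ x) 0 with hfm_def
  have hfp0 : ∀ x, 0 ≤ fp x := fun x => le_max_right _ _
  have hfm0 : ∀ x, 0 ≤ fm x := fun x => le_max_right _ _
  have hsub : ∀ x, fp x - fm x = φ x := by
    intro x
    rcases le_total 0 (φ x) with h | h
    · simp only [hfp_def, hfm_def]
      rw [max_eq_left h, max_eq_right (neg_nonpos.2 h), sub_zero]
    · simp only [hfp_def, hfm_def]
      rw [max_eq_right h, max_eq_left (neg_nonneg.2 h)]
      ring
  have habs : ∀ x, fp x + fm x = |φ x| := by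
    intro x
    rcases le_total 0 (φ x) with h | h
    · simp only [hfp_def, hfm_def]
      rw [max_eq_left h, max_eq_right (neg_nonpos.2 h), add_zero, abs_of_nonneg h]
    · simp only [hfp_def, hfm_def]
      rw [max_eq_right h, max_eq_left (neg_nonneg.2 h), zero_add, abs_of_nonpos h]
  set Pfp : V → ℝ := fun x => ∑ y ∈ G.neighborFinset x, fp y / (G.degree y : ℝ) with hPfp_def
  set Pfm : V → ℝ := fun x => ∑ y ∈ G.neighborFinset x, fm y / (G.degree y : ℝ) with hPfm_def
  have hPfp0 : ∀ x, 0 ≤ Pfp x := fun x =>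
    Finset.sum_nonneg fun y _ => div_nonneg (hfp0 y) (Nat.cast_nonneg _)
  have hPfm0 : ∀ x, 0 ≤ Pfm x := fun x =>
    Finset.sum_nonneg fun y _ => div_nonneg (hfm0 y) (Nat.cast_nonneg _)
  -- mass preservation
  have hmass : ∀ g : V → ℝ,
      ∑ x, ∑ y ∈ G.neighborFinset x, g y / (G.degree y : ℝ) = ∑ x, g x := by
    intro g
    rw [sum_nbr G (fun y => g y / (G.degree y : ℝ))]
    exact Finset.sum_congr rfl fun y _ => by
      rw [mul_comm, div_mul_cancel₀ _ (hdeg' y)]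
  -- eigen equation for P
  have hPφ : ∀ x, ∑ y ∈ G.neighborFinset x, φ y / (G.degree y : ℝ) = (1 - lam) * φ x := by
    intro x
    have := heig x
    linarith [this]
  -- sum of φ is zero
  have hsum0 : ∑ x, φ x = 0 := by
    have h1 : ∑ x, ∑ y ∈ G.neighborFinset x, φ y / (G.degree y : ℝ) = ∑ x, φ x := hmass φ
    have h2 : ∑ x, ∑ y ∈ G.neighborFinset x, φ y / (G.degree y : ℝ)
        = (1 - lam) * ∑ x, φ x := by
      rw [Finset.mul_sum]
      exact Finset.sum_congr rfl fun x _ => hPφ x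
    have h3 : (1 - lam) * ∑ x, φ x = ∑ x, φ x := by rw [← h2, h1]
    nlinarith [h3]
  set m : ℝ := ∑ x, fp x with hm_def
  have hm0 : 0 ≤ m := Finset.sum_nonneg fun x _ => hfp0 x
  have hm_eq : ∑ x, fp x = ∑ x, fm x := by
    have : ∑ x, (fp x - fm x) = 0 := by
      rw [Finset.sum_congr rfl fun x _ => hsub x, hsum0]
    rw [Finset.sum_sub_distrib] at this
    linarith
  have h2m : ∑ x, |φ x| = 2 * m := by
    have : ∑ x, (fp x + fm x) = ∑ x, |φ x| :=
      Finset.sum_congr rfl fun x _ => habs x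
    rw [Finset.sum_add_distrib] at this
    rw [← this, ← hm_def, ← hm_eq]
    ring
  have hmassp : ∑ x, Pfp x = m := by rw [hPfp_def]; exact hmass fp
  have hmassm : ∑ x, Pfm x = m := by
    rw [hPfm_def]; rw [hmass fm]; exact hm_eq.symm
  -- linearity: Pfp - Pfm = (1-lam) φ
  have hPlin : ∀ x, Pfp x - Pfm x = (1 - lam) * φ x := by
    intro x
    rw [hPfp_def, hPfm_def]
    simp only
    rw [← Finset.sum_sub_distrib, ← hPφ x]
    refine Finset.sum_congr rfl fun y _ => ?_
    rw [← hsub y]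
    ring
  set A : ℝ := W1 G fp fm with hA_def
  rcases le_or_gt 0 (1 - lam) with hmu | hmu
  · -- case 0 < lam ≤ 1
    have habsmu : |1 - lam| = 1 - lam := abs_of_nonneg hmu
    set r : V → ℝ := fun x => Pfp x - (1 - lam) * fp x with hr_def
    have hr0 : ∀ x, 0 ≤ r x := by
      intro x
      rw [hr_def]
      simp only
      rcases le_total 0 (φ x) with h | h
      · have h1 : ∑ y ∈ G.neighborFinset x, φ y / (G.degree y : ℝ) ≤ Pfp x := by
          rw [hPfp_def]
          refine Finset.sum_le_sum fun y _ => ?_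
          gcongr
          · exact le_max_left _ _
        have h2 : fp x = φ x := by rw [hfp_def]; exact max_eq_left h
        rw [h2]
        rw [hPφ x] at h1
        linarith
      · have h2 : fp x = 0 := by rw [hfp_def]; exact max_eq_right h
        rw [h2, mul_zero, sub_zero]
        exact hPfp0 x
    have hrm : ∀ x, Pfm x - (1 - lam) * fm x = r x := by
      intro x
      rw [hr_def]
      have h1 := hPlin x
      have h2 := hsub x
      simp only
      nlinarith [h1, h2]
    have hfp_eq : Pfp = fun x => (1 - lam) * fp x + r x := by
      funext x
      rw [hr_def]
      ring
    have hfm_eq : Pfm = fun x => (1 - lam) * fm x + r x := by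
      funext x
      have := hrm x
      linarith
    have hrmass : ∑ x, r x = ∑ x, r x := rfl
    have t3 : W1 G fp Pfp ≤ m := by
      have := W1_step G hdeg hfp0
      rw [← hPfp_def] at this
      exact this
    have t4 : W1 G Pfm fm ≤ m := by
      have h1 := W1_step G hdeg hfm0
      rw [← hPfm_def] at h1
      have h2 := W1_symm_le G hfm0 hPfm0 (by rw [hmassm, ← hm_eq, hm_def])
      calc W1 G Pfm fm ≤ W1 G fm Pfm := h2
        _ ≤ ∑ x, fm x := h1
        _ = m := by rw [← hm_eq, hm_def]
    have t5 : W1 G Pfp Pfm ≤ (1 - lam) * A := by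
      rw [hfp_eq, hfm_eq]
      have hadd := W1_add_le G (p₁ := fun x => (1 - lam) * fp x)
        (q₁ := fun x => (1 - lam) * fm x) (p₂ := r) (q₂ := r)
        (fun x => mul_nonneg hmu (hfp0 x)) (fun x => mul_nonneg hmu (hfm0 x))
        hr0 hr0
        (by rw [← Finset.mul_sum, ← Finset.mul_sum, hm_eq]) rfl
      have hsc := W1_smul_le G (c := 1 - lam) hmu hfp0 hfm0 hm_eq
      have hself := W1_self_nonpos G hr0
      calc W1 G (fun x => (1 - lam) * fp x + r x) (fun x => (1 - lam) * fm x + r x)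
          ≤ W1 G (fun x => (1 - lam) * fp x) (fun x => (1 - lam) * fm x) + W1 G r r := hadd
        _ ≤ (1 - lam) * W1 G fp fm + 0 := add_le_add hsc hself
        _ = (1 - lam) * A := by rw [add_zero, hA_def]
    have t1 : A ≤ W1 G fp Pfp + W1 G Pfp fm := by
      rw [hA_def]
      exact W1_triangle G hconn hfp0 hPfp0 hfm0 (by rw [hmassp, hm_def])
        (by rw [hmassp, ← hm_eq, hm_def])
    have t2 : W1 G Pfp fm ≤ W1 G Pfp Pfm + W1 G Pfm fm :=
      W1_triangle G hconn hPfp0 hPfm0 hfm0 (by rw [hmassp, hmassm])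
        (by rw [hmassm, ← hm_eq, hm_def])
    have hAle : lam * A ≤ 2 * m := by nlinarith [t1, t2, t3, t4, t5]
    rw [habsmu, h2m]
    have he : 1 - (1 - lam) = lam := by ring
    rw [he, one_div, inv_mul_eq_div, le_div_iff₀ hlam0]
    nlinarith [hAle]
  · -- case 1 < lam < 2
    have habsmu : |1 - lam| = lam - 1 := by
      rw [abs_of_neg hmu]; ring
    have hν0 : 0 ≤ lam - 1 := by linarith
    set r : V → ℝ := fun x => Pfp x + (lam - 1) * fp x with hr_def
    have hr0 : ∀ x, 0 ≤ r x := fun x =>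
      add_nonneg (hPfp0 x) (mul_nonneg hν0 (hfp0 x))
    have hrm : ∀ x, Pfm x + (lam - 1) * fm x = r x := by
      intro x
      rw [hr_def]
      have h1 := hPlin x
      have h2 := hsub x
      simp only
      nlinarith [h1, h2]
    have hrmass : ∑ x, r x = lam * m := by
      rw [hr_def]
      simp only
      rw [Finset.sum_add_distrib, hmassp, ← Finset.mul_sum, ← hm_def]
      ring
    -- lam * A ≤ W1 (lam • fp) (lam • fm)
    have hstepA : lam * A ≤ W1 G (fun x => lam * fp x) (fun x => lam * fm x) := by
      have hs := W1_smul_le G (c := 1 / lam) (by positivity)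
        (fun x => mul_nonneg hlam0.le (hfp0 x)) (fun x => mul_nonneg hlam0.le (hfm0 x))
        (by rw [← Finset.mul_sum, ← Finset.mul_sum, hm_eq])
      have e1 : (fun x => 1 / lam * (lam * fp x)) = fp := by
        funext x; field_simp
      have e2 : (fun x => 1 / lam * (lam * fm x)) = fm := by
        funext x; field_simp
      rw [e1, e2] at hs
      have := mul_le_mul_of_nonneg_left hs hlam0.le
      calc lam * A = lam * W1 G fp fm := by rw [hA_def]
        _ ≤ lam * (1 / lam * W1 G (fun x => lam * fp x) (fun x => lam * fm x)) := this
        _ = W1 G (fun x => lam * fp x) (fun x => lam * fm x) := by field_simp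
    have hW0 : 0 ≤ W1 G (fun x => lam * fp x) (fun x => lam * fm x) := by
      have := hstepA
      nlinarith [W1_nonneg G (cpl_nonempty G (p := fun x => lam * fp x)
        (q := fun x => lam * fm x) (fun x => mul_nonneg hlam0.le (hfp0 x))
        (fun x => mul_nonneg hlam0.le (hfm0 x))
        (by rw [← Finset.mul_sum, ← Finset.mul_sum, hm_eq]))]
    have hmassl : ∑ x, lam * fp x = lam * m := by rw [← Finset.mul_sum, ← hm_def]
    have hmassl' : ∑ x, lam * fm x = lam * m := by
      rw [← Finset.mul_sum, ← hm_eq, ← hm_def]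
    have tri : W1 G (fun x => lam * fp x) (fun x => lam * fm x) ≤
        W1 G (fun x => lam * fp x) r + W1 G r (fun x => lam * fm x) :=
      W1_triangle G hconn (fun x => mul_nonneg hlam0.le (hfp0 x)) hr0
        (fun x => mul_nonneg hlam0.le (hfm0 x))
        (by rw [hmassl, hrmass]) (by rw [hrmass, hmassl'])
    have b1 : W1 G (fun x => lam * fp x) r ≤ m := by
      have e1 : (fun x => lam * fp x) = fun x => (lam - 1) * fp x + fp x := by
        funext x; ring
      have e2 : r = fun x => (lam - 1) * fp x + Pfp x := by
        funext x; rw [hr_def]; ring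
      rw [e1, e2]
      have hadd := W1_add_le G (p₁ := fun x => (lam - 1) * fp x)
        (q₁ := fun x => (lam - 1) * fp x) (p₂ := fp) (q₂ := Pfp)
        (fun x => mul_nonneg hν0 (hfp0 x)) (fun x => mul_nonneg hν0 (hfp0 x))
        hfp0 hPfp0 rfl (by rw [hmassp, hm_def])
      have hself := W1_self_nonpos G (p := fun x => (lam - 1) * fp x)
        (fun x => mul_nonneg hν0 (hfp0 x))
      have t3 : W1 G fp Pfp ≤ m := by
        have := W1_step G hdeg hfp0
        rw [← hPfp_def] at this
        exact this
      calc W1 G (fun x => (lam - 1) * fp x + fp x) (fun x => (lam - 1) * fp x + Pfp x)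
          ≤ W1 G (fun x => (lam - 1) * fp x) (fun x => (lam - 1) * fp x) + W1 G fp Pfp := hadd
        _ ≤ 0 + m := add_le_add hself t3
        _ = m := by ring
    have b2 : W1 G r (fun x => lam * fm x) ≤ m := by
      have e1 : (fun x => lam * fm x) = fun x => (lam - 1) * fm x + fm x := by
        funext x; ring
      have e2 : r = fun x => (lam - 1) * fm x + Pfm x := by
        funext x
        have := hrm x
        linarith
      rw [e1, e2]
      have hadd := W1_add_le G (p₁ := fun x => (lam - 1) * fm x)
        (q₁ := fun x => (lam - 1) * fm x) (p₂ := Pfm) (q₂ := fm)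
        (fun x => mul_nonneg hν0 (hfm0 x)) (fun x => mul_nonneg hν0 (hfm0 x))
        hPfm0 hfm0 rfl (by rw [hmassm, ← hm_eq, hm_def])
      have hself := W1_self_nonpos G (p := fun x => (lam - 1) * fm x)
        (fun x => mul_nonneg hν0 (hfm0 x))
      have t4 : W1 G Pfm fm ≤ m := by
        have h1 := W1_step G hdeg hfm0
        rw [← hPfm_def] at h1
        have h2 := W1_symm_le G hfm0 hPfm0 (by rw [hmassm, ← hm_eq, hm_def])
        calc W1 G Pfm fm ≤ W1 G fm Pfm := h2
          _ ≤ ∑ x, fm x := h1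
          _ = m := by rw [← hm_eq, hm_def]
      calc W1 G (fun x => (lam - 1) * fm x + Pfm x) (fun x => (lam - 1) * fm x + fm x)
          ≤ W1 G (fun x => (lam - 1) * fm x) (fun x => (lam - 1) * fm x) + W1 G Pfm fm := hadd
        _ ≤ 0 + m := add_le_add hself t4
        _ = m := by ring
    have hAle : lam * A ≤ 2 * m := by linarith [hstepA, tri, b1, b2]
    rw [habsmu, h2m]
    have he : 1 - (lam - 1) = 2 - lam := by ring
    have h2lam : 0 < 2 - lam := by linarith
    rw [he, one_div, inv_mul_eq_div, le_div_iff₀ h2lam]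
    nlinarith [hAle, hm0]
end

section
/- Let G=(V,E) be a finite connected simple graph with no isolated vertices, and let L = Id − A D^{-1}. Suppose φ : V → ℝ is a nonzero vector with Lφ = λφ where λ ∈ ℝ, λ ≠ 0. Then for every integer ℓ ≥ 0: W₁(φ⁺, φ⁻) ≤ ( |1 − λ|^ℓ · diam(G)/2 + Σ_{i=0}^{ℓ−1} |1 − λ|^i ) · ‖φ‖_{ℓ¹}, where diam(G) is the graph diameter, φ⁺, φ⁻ are the positive and negative parts of φ, and ‖φ‖_{ℓ¹} = Σ_{x∈V} |φ(x)|. -/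
open Finset

/-- The diameter of a finite graph: the largest shortest-path distance between
two vertices. -/
noncomputable def graphDiam {V : Type*} [Fintype V] (G : SimpleGraph V) : ℕ :=
  Finset.sup Finset.univ fun p : V × V => G.dist p.1 p.2

namespace StmtFive

variable {V : Type*} [Fintype V] (G : SimpleGraph V)

/-- The set of achievable coupling costs. -/
def CSet (p q : V → ℝ) : Set ℝ :=
  { c : ℝ | ∃ γ : V → V → ℝ, (∀ x y, 0 ≤ γ x y) ∧
    (∀ x, ∑ y, γ x y = p x) ∧ (∀ y, ∑ x, γ x y = q y) ∧
    c = ∑ x, ∑ y, γ x y * (G.dist x y : ℝ) }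

lemma W1_eq (p q : V → ℝ) : W1 G p q = sInf (CSet G p q) := rfl

variable {G}

lemma nonneg_of_mem {p q : V → ℝ} {c : ℝ} (hc : c ∈ CSet G p q) : 0 ≤ c := by
  obtain ⟨γ, hγ0, -, -, rfl⟩ := hc
  exact Finset.sum_nonneg fun x _ => Finset.sum_nonneg fun y _ =>
    mul_nonneg (hγ0 x y) (by positivity)

lemma cset_bddBelow (p q : V → ℝ) : BddBelow (CSet G p q) :=
  ⟨0, fun _ hc => nonneg_of_mem hc⟩

lemma W1_le_of_mem {p q : V → ℝ} {c : ℝ} (hc : c ∈ CSet G p q) : W1 G p q ≤ c :=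
  csInf_le (cset_bddBelow p q) hc

lemma W1_nonneg {p q : V → ℝ} (h : (CSet G p q).Nonempty) : 0 ≤ W1 G p q :=
  le_csInf h fun _ hc => nonneg_of_mem hc

lemma cset_exists {p q : V → ℝ} (hp : ∀ x, 0 ≤ p x) (hq : ∀ x, 0 ≤ q x)
    (hpq : ∑ x, p x = ∑ x, q x) :
    ∃ c ∈ CSet G p q, c ≤ (graphDiam G : ℝ) * ∑ x, p x := by
  set m := ∑ x, p x with hm
  have hm0 : 0 ≤ m := Finset.sum_nonneg fun x _ => hp x
  rcases eq_or_lt_of_le hm0 with hz | hpos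
  · have hp0 : ∀ x, p x = 0 := fun x =>
      (Finset.sum_eq_zero_iff_of_nonneg (fun i _ => hp i)).mp hz.symm x (Finset.mem_univ x)
    have hq0 : ∀ x, q x = 0 := fun x =>
      (Finset.sum_eq_zero_iff_of_nonneg (fun i _ => hq i)).mp (hpq ▸ hz.symm) x (Finset.mem_univ x)
    refine ⟨0, ⟨fun _ _ => 0, fun _ _ => le_refl 0, fun x => by simp [hp0 x],
      fun y => by simp [hq0 y], by simp⟩, by rw [← hz]; simp⟩
  · set γ : V → V → ℝ := fun x y => p x * q y / m with hγ
    have hmne : m ≠ 0 := ne_of_gt hpos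
    have hmarg1 : ∀ x, ∑ y, γ x y = p x := by
      intro x
      rw [show (∑ y, γ x y) = p x * (∑ y, q y) / m by
        rw [← Finset.sum_div, ← Finset.mul_sum], ← hpq]
      field_simp
    have hmarg2 : ∀ y, ∑ x, γ x y = q y := by
      intro y
      rw [show (∑ x, γ x y) = (∑ x, p x) * q y / m by
        rw [← Finset.sum_div, ← Finset.sum_mul], ← hm]
      field_simp
    refine ⟨∑ x, ∑ y, γ x y * (G.dist x y : ℝ),
      ⟨γ, fun x y => div_nonneg (mul_nonneg (hp x) (hq y)) hm0, hmarg1, hmarg2, rfl⟩, ?_⟩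
    have hDle : ∀ x y : V, (G.dist x y : ℝ) ≤ (graphDiam G : ℝ) := by
      intro x y
      exact_mod_cast Finset.le_sup (f := fun p : V × V => G.dist p.1 p.2)
        (Finset.mem_univ (x, y))
    calc ∑ x, ∑ y, γ x y * (G.dist x y : ℝ)
        ≤ ∑ x, ∑ y, γ x y * (graphDiam G : ℝ) := by
          refine Finset.sum_le_sum fun x _ => Finset.sum_le_sum fun y _ => ?_
          exact mul_le_mul_of_nonneg_left (hDle x y) (div_nonneg (mul_nonneg (hp x) (hq y)) hm0)
      _ = ∑ x, (∑ y, γ x y) * (graphDiam G : ℝ) := by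
          refine Finset.sum_congr rfl fun x _ => (Finset.sum_mul _ _ _).symm
      _ = ∑ x, p x * (graphDiam G : ℝ) := by
          refine Finset.sum_congr rfl fun x _ => by rw [hmarg1 x]
      _ = (graphDiam G : ℝ) * m := by rw [← Finset.sum_mul, ← hm, mul_comm]

lemma cset_nonempty {p q : V → ℝ} (hp : ∀ x, 0 ≤ p x) (hq : ∀ x, 0 ≤ q x)
    (hpq : ∑ x, p x = ∑ x, q x) : (CSet G p q).Nonempty := by
  obtain ⟨c, hc, -⟩ := cset_exists hp hq hpq; exact ⟨c, hc⟩

lemma W1_le_diam {p q : V → ℝ} (hp : ∀ x, 0 ≤ p x) (hq : ∀ x, 0 ≤ q x)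
    (hpq : ∑ x, p x = ∑ x, q x) : W1 G p q ≤ (graphDiam G : ℝ) * ∑ x, p x := by
  obtain ⟨c, hc, hle⟩ := cset_exists hp hq hpq
  exact le_trans (W1_le_of_mem hc) hle

lemma glue (hconn : G.Connected) {p q r : V → ℝ} {c₁ c₂ : ℝ}
    (h₁ : c₁ ∈ CSet G p q) (h₂ : c₂ ∈ CSet G q r) :
    ∃ c₃ ∈ CSet G p r, c₃ ≤ c₁ + c₂ := by
  obtain ⟨γ₁, hγ₁0, hγ₁p, hγ₁q, rfl⟩ := h₁
  obtain ⟨γ₂, hγ₂0, hγ₂q, hγ₂r, rfl⟩ := h₂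
  have hq0 : ∀ y, 0 ≤ q y := fun y => (hγ₁q y) ▸ Finset.sum_nonneg fun x _ => hγ₁0 x y
  have hz1 : ∀ y, q y = 0 → ∀ x, γ₁ x y = 0 := by
    intro y hy x
    exact (Finset.sum_eq_zero_iff_of_nonneg (fun i _ => hγ₁0 i y)).mp ((hγ₁q y).trans hy) x
      (Finset.mem_univ x)
  have hz2 : ∀ y, q y = 0 → ∀ z, γ₂ y z = 0 := by
    intro y hy z
    exact (Finset.sum_eq_zero_iff_of_nonneg (fun i _ => hγ₂0 y i)).mp ((hγ₂q y).trans hy) z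
      (Finset.mem_univ z)
  set γ : V → V → ℝ := fun x z => ∑ y, (γ₁ x y / q y) * γ₂ y z with hγ
  have hγ0 : ∀ x z, 0 ≤ γ x z := fun x z =>
    Finset.sum_nonneg fun y _ => mul_nonneg (div_nonneg (hγ₁0 x y) (hq0 y)) (hγ₂0 y z)
  have hmarg1 : ∀ x, ∑ z, γ x z = p x := by
    intro x
    rw [← hγ₁p x, Finset.sum_comm]
    refine Finset.sum_congr rfl fun y _ => ?_
    rw [← Finset.mul_sum, hγ₂q y]
    by_cases hy : q y = 0
    · simp [hy, hz1 y hy x]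
    · field_simp
  have hmarg2 : ∀ z, ∑ x, γ x z = r z := by
    intro z
    rw [← hγ₂r z, Finset.sum_comm]
    refine Finset.sum_congr rfl fun y _ => ?_
    rw [show (∑ x, γ₁ x y / q y * γ₂ y z) = (∑ x, γ₁ x y) / q y * γ₂ y z by
      rw [Finset.sum_div, Finset.sum_mul], hγ₁q y]
    by_cases hy : q y = 0
    · simp [hy, hz2 y hy z]
    · field_simp
  refine ⟨∑ x, ∑ z, γ x z * (G.dist x z : ℝ), ⟨γ, hγ0, hmarg1, hmarg2, rfl⟩, ?_⟩
  have tri : ∀ x y z : V, (G.dist x z : ℝ) ≤ (G.dist x y : ℝ) + (G.dist y z : ℝ) := by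
    intro x y z
    exact_mod_cast hconn.dist_triangle
  calc ∑ x, ∑ z, γ x z * (G.dist x z : ℝ)
      ≤ ∑ x, ∑ z, ∑ y, (γ₁ x y / q y * γ₂ y z) * ((G.dist x y : ℝ) + (G.dist y z : ℝ)) := by
        refine Finset.sum_le_sum fun x _ => Finset.sum_le_sum fun z _ => ?_
        rw [hγ, Finset.sum_mul]
        refine Finset.sum_le_sum fun y _ => ?_
        exact mul_le_mul_of_nonneg_left (tri x y z)
          (mul_nonneg (div_nonneg (hγ₁0 x y) (hq0 y)) (hγ₂0 y z))
    _ = (∑ x, ∑ z, ∑ y, (γ₁ x y / q y * γ₂ y z) * (G.dist x y : ℝ))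
        + (∑ x, ∑ z, ∑ y, (γ₁ x y / q y * γ₂ y z) * (G.dist y z : ℝ)) := by
        rw [← Finset.sum_add_distrib]
        refine Finset.sum_congr rfl fun x _ => ?_
        rw [← Finset.sum_add_distrib]
        refine Finset.sum_congr rfl fun z _ => ?_
        rw [← Finset.sum_add_distrib]
        refine Finset.sum_congr rfl fun y _ => by ring
    _ ≤ (∑ x, ∑ y, γ₁ x y * (G.dist x y : ℝ)) + (∑ y, ∑ z, γ₂ y z * (G.dist y z : ℝ)) := by
        have e1 : (∑ x, ∑ z, ∑ y, (γ₁ x y / q y * γ₂ y z) * (G.dist x y : ℝ))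
            = ∑ x, ∑ y, γ₁ x y * (G.dist x y : ℝ) := by
          refine Finset.sum_congr rfl fun x _ => ?_
          rw [Finset.sum_comm]
          refine Finset.sum_congr rfl fun y _ => ?_
          rw [show (∑ z, γ₁ x y / q y * γ₂ y z * (G.dist x y : ℝ))
              = γ₁ x y / q y * (∑ z, γ₂ y z) * (G.dist x y : ℝ) by
            rw [Finset.mul_sum, Finset.sum_mul], hγ₂q y]
          by_cases hy : q y = 0
          · simp [hy, hz1 y hy x]
          · field_simp
        have e2 : (∑ x, ∑ z, ∑ y, (γ₁ x y / q y * γ₂ y z) * (G.dist y z : ℝ))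
            = ∑ y, ∑ z, γ₂ y z * (G.dist y z : ℝ) := by
          refine Eq.trans ?_ (Finset.sum_comm (s := Finset.univ) (t := Finset.univ)
            (f := fun z y => γ₂ y z * (G.dist y z : ℝ)))
          rw [Finset.sum_comm]
          refine Finset.sum_congr rfl fun z _ => ?_
          rw [Finset.sum_comm]
          refine Finset.sum_congr rfl fun y _ => ?_
          rw [show (∑ x, γ₁ x y / q y * γ₂ y z * (G.dist y z : ℝ))
              = (∑ x, γ₁ x y) / q y * γ₂ y z * (G.dist y z : ℝ) by
            rw [Finset.sum_div, Finset.sum_mul, Finset.sum_mul], hγ₁q y]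
          by_cases hy : q y = 0
          · simp [hy, hz2 y hy z]
          · field_simp
        rw [e1, e2]
lemma W1_triangle (hconn : G.Connected) {p q r : V → ℝ}
    (h₁ : (CSet G p q).Nonempty) (h₂ : (CSet G q r).Nonempty) :
    W1 G p r ≤ W1 G p q + W1 G q r := by
  refine le_of_forall_pos_le_add fun ε hε => ?_
  obtain ⟨c₁, hc₁, hlt₁⟩ := Real.lt_sInf_add_pos h₁ (half_pos hε)
  obtain ⟨c₂, hc₂, hlt₂⟩ := Real.lt_sInf_add_pos h₂ (half_pos hε)
  obtain ⟨c₃, hc₃, hle⟩ := glue hconn hc₁ hc₂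
  calc W1 G p r ≤ c₃ := W1_le_of_mem hc₃
    _ ≤ c₁ + c₂ := hle
    _ ≤ (sInf (CSet G p q) + ε / 2) + (sInf (CSet G q r) + ε / 2) :=
        add_le_add hlt₁.le hlt₂.le
    _ = W1 G p q + W1 G q r + ε := by rw [W1_eq, W1_eq]; ring

lemma cset_symm_subset (p q : V → ℝ) : CSet G p q ⊆ CSet G q p := by
  rintro c ⟨γ, hγ0, h1, h2, rfl⟩
  refine ⟨fun x y => γ y x, fun x y => hγ0 y x, h2, h1, ?_⟩
  calc ∑ x, ∑ y, γ x y * (G.dist x y : ℝ)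
      = ∑ y, ∑ x, γ x y * (G.dist x y : ℝ) := Finset.sum_comm
    _ = ∑ y, ∑ x, γ x y * (G.dist y x : ℝ) := by
        refine Finset.sum_congr rfl fun y _ => Finset.sum_congr rfl fun x _ => ?_
        rw [SimpleGraph.dist_comm]

lemma W1_symm (p q : V → ℝ) : W1 G p q = W1 G q p := by
  rw [W1_eq, W1_eq]
  congr 1
  exact le_antisymm (cset_symm_subset p q) (cset_symm_subset q p)

lemma W1_add_diag {p q : V → ℝ} (r : V → ℝ) (hr : ∀ x, 0 ≤ r x)
    (hne : (CSet G p q).Nonempty) :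
    W1 G (fun x => p x + r x) (fun x => q x + r x) ≤ W1 G p q := by
  classical
  rw [W1_eq, W1_eq]
  refine csInf_le_csInf (cset_bddBelow _ _) hne ?_
  rintro c ⟨γ, hγ0, h1, h2, rfl⟩
  refine ⟨fun x y => γ x y + if x = y then r y else 0, ?_, ?_, ?_, ?_⟩
  · intro x y
    refine add_nonneg (hγ0 x y) ?_
    by_cases h : x = y <;> simp [h, hr y]
  · intro x
    rw [Finset.sum_add_distrib, h1, Finset.sum_ite_eq]
    simp
  · intro y
    rw [Finset.sum_add_distrib, h2, Finset.sum_ite_eq']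
    simp
  · rw [show (∑ x, ∑ y, (γ x y + if x = y then r y else 0) * (G.dist x y : ℝ))
      = (∑ x, ∑ y, γ x y * (G.dist x y : ℝ))
        + ∑ x, ∑ y, (if x = y then r y else 0) * (G.dist x y : ℝ) by
      rw [← Finset.sum_add_distrib]
      refine Finset.sum_congr rfl fun x _ => ?_
      rw [← Finset.sum_add_distrib]
      exact Finset.sum_congr rfl fun y _ => add_mul _ _ _]
    simp [ite_mul, Finset.sum_ite_eq, SimpleGraph.dist_self]

lemma cset_smul {p q : V → ℝ} {a : ℝ} (c : ℝ) (hc : 0 ≤ c) (ha : a ∈ CSet G p q) :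
    c * a ∈ CSet G (fun x => c * p x) (fun x => c * q x) := by
  obtain ⟨γ, hγ0, h1, h2, rfl⟩ := ha
  refine ⟨fun x y => c * γ x y, fun x y => mul_nonneg hc (hγ0 x y), ?_, ?_, ?_⟩
  · intro x; rw [← Finset.mul_sum, h1]
  · intro y; rw [← Finset.mul_sum, h2]
  · rw [Finset.mul_sum]
    refine Finset.sum_congr rfl fun x _ => ?_
    rw [Finset.mul_sum]
    exact Finset.sum_congr rfl fun y _ => by ring

lemma W1_smul_le {p q : V → ℝ} (c : ℝ) (hc : 0 ≤ c) (hne : (CSet G p q).Nonempty) :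
    W1 G (fun x => c * p x) (fun x => c * q x) ≤ c * W1 G p q := by
  rcases eq_or_lt_of_le hc with hz | hpos
  · obtain ⟨a, ha⟩ := hne
    have := W1_le_of_mem (cset_smul c hc ha)
    rw [← hz] at this ⊢
    simpa using this
  · refine le_of_forall_pos_le_add fun ε hε => ?_
    obtain ⟨a, ha, hlt⟩ := Real.lt_sInf_add_pos hne (div_pos hε hpos)
    calc W1 G (fun x => c * p x) (fun x => c * q x)
        ≤ c * a := W1_le_of_mem (cset_smul c hc ha)
      _ ≤ c * (sInf (CSet G p q) + ε / c) := mul_le_mul_of_nonneg_left hlt.le hc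
      _ = c * W1 G p q + ε := by rw [W1_eq]; field_simp
section Graph
variable [DecidableRel G.Adj]

lemma filter_adj (y : V) :
    Finset.univ.filter (fun x => G.Adj x y) = G.neighborFinset y := by
  ext a
  simp only [Finset.mem_filter, Finset.mem_univ, true_and, SimpleGraph.mem_neighborFinset]
  exact ⟨fun h => h.symm, fun h => h.symm⟩

lemma row_sum (hdeg : ∀ x, 0 < G.degree x) (p : V → ℝ) (x : V) :
    ∑ y, (if G.Adj x y then p x / (G.degree x : ℝ) else 0) = p x := by
  rw [← Finset.sum_filter, Finset.sum_const]
  have hcard : (Finset.univ.filter (fun y => G.Adj x y)).card = G.degree x := by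
    congr 1
    ext a
    simp [SimpleGraph.mem_neighborFinset]
  rw [hcard, nsmul_eq_mul, mul_div_cancel₀]
  exact Nat.cast_ne_zero.mpr (hdeg x).ne'

lemma sum_M (hdeg : ∀ x, 0 < G.degree x) (p : V → ℝ) :
    ∑ y, ∑ x ∈ G.neighborFinset y, p x / (G.degree x : ℝ) = ∑ x, p x := by
  have h : ∀ y, (∑ x ∈ G.neighborFinset y, p x / (G.degree x : ℝ))
      = ∑ x, if G.Adj x y then p x / (G.degree x : ℝ) else 0 := by
    intro y
    rw [← filter_adj, Finset.sum_filter]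
  calc ∑ y, ∑ x ∈ G.neighborFinset y, p x / (G.degree x : ℝ)
      = ∑ y, ∑ x, if G.Adj x y then p x / (G.degree x : ℝ) else 0 :=
        Finset.sum_congr rfl fun y _ => h y
    _ = ∑ x, ∑ y, if G.Adj x y then p x / (G.degree x : ℝ) else 0 := Finset.sum_comm
    _ = ∑ x, p x := Finset.sum_congr rfl fun x _ => row_sum hdeg p x

lemma W1_step (hdeg : ∀ x, 0 < G.degree x) (p : V → ℝ) (hp : ∀ x, 0 ≤ p x) :
    W1 G p (fun y => ∑ x ∈ G.neighborFinset y, p x / (G.degree x : ℝ)) ≤ ∑ x, p x := by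
  set γ : V → V → ℝ := fun x y => if G.Adj x y then p x / (G.degree x : ℝ) else 0 with hγ
  have hγ0 : ∀ x y, 0 ≤ γ x y := by
    intro x y
    by_cases h : G.Adj x y <;>
      simp [hγ, h, div_nonneg (hp x) (Nat.cast_nonneg (G.degree x))]
  have hmarg1 : ∀ x, ∑ y, γ x y = p x := fun x => row_sum hdeg p x
  have hmarg2 : ∀ y, ∑ x, γ x y
      = ∑ x ∈ G.neighborFinset y, p x / (G.degree x : ℝ) := by
    intro y
    rw [← filter_adj, Finset.sum_filter]
  have hcost : (∑ x, ∑ y, γ x y * (G.dist x y : ℝ)) = ∑ x, p x := by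
    refine Finset.sum_congr rfl ?_ |>.trans (Finset.sum_congr rfl fun x _ => hmarg1 x)
    intro x _
    refine Finset.sum_congr rfl fun y _ => ?_
    by_cases h : G.Adj x y
    · simp [hγ, h, SimpleGraph.dist_eq_one_iff_adj.mpr h]
    · simp [hγ, h]
  have := W1_le_of_mem (G := G) ⟨γ, hγ0, hmarg1, hmarg2, rfl⟩
  rwa [hcost] at this

end Graph
end StmtFive

open StmtFive in
/-- for every eigenvector `φ` of `L = Id - A D⁻¹` with eigenvalue
`λ ≠ 0` and every `ℓ ≥ 0`,
`W₁(φ⁺, φ⁻) ≤ (|1-λ|^ℓ · diam(G)/2 + ∑_{i<ℓ} |1-λ|^i) · ‖φ‖₁`. -/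
theorem stmt5 {V : Type*} [Fintype V] (G : SimpleGraph V) [DecidableRel G.Adj]
    (hconn : G.Connected) (hdeg : ∀ x, 0 < G.degree x)
    (φ : V → ℝ) (hφ : φ ≠ 0) (lam : ℝ) (hlam : lam ≠ 0)
    (heig : ∀ x, φ x - ∑ y ∈ G.neighborFinset x, φ y / (G.degree y : ℝ) = lam * φ x)
    (ℓ : ℕ) :
    W1 G (fun x => max (φ x) 0) (fun x => max (-φ x) 0) ≤
      (|1 - lam| ^ ℓ * (graphDiam G : ℝ) / 2 + ∑ i ∈ Finset.range ℓ, |1 - lam| ^ i) *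
        ∑ x, |φ x| := by
  classical
  set c : ℝ := 1 - lam with hcdef
  set D : ℝ := (graphDiam G : ℝ) with hDdef
  set pos : V → ℝ := fun x => max (φ x) 0 with hposd
  set neg : V → ℝ := fun x => max (-φ x) 0 with hnegd
  set A : ℝ := ∑ x, |φ x| with hAdef
  -- pointwise max facts
  have hmaxsub : ∀ a : ℝ, max a 0 - max (-a) 0 = a := by
    intro a
    rcases le_total a 0 with h | h
    · rw [max_eq_right h, max_eq_left (by linarith)]; ring
    · rw [max_eq_left h, max_eq_right (by linarith)]; ring
  have hmaxadd : ∀ a : ℝ, max a 0 + max (-a) 0 = |a| := by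
    intro a
    rcases le_total a 0 with h | h
    · rw [max_eq_right h, max_eq_left (by linarith), abs_of_nonpos h]; ring
    · rw [max_eq_left h, max_eq_right (by linarith), abs_of_nonneg h]; ring
  have hmaxmul : ∀ t : ℝ, 0 ≤ t → ∀ a : ℝ, max (t * a) 0 = t * max a 0 := by
    intro t ht a
    rcases le_total a 0 with h | h
    · rw [max_eq_right (mul_nonpos_iff.mpr (Or.inl ⟨ht, h⟩)), max_eq_right h, mul_zero]
    · rw [max_eq_left (mul_nonneg ht h), max_eq_left h]
  have hpos0 : ∀ x, 0 ≤ pos x := fun x => le_max_right _ _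
  have hneg0 : ∀ x, 0 ≤ neg x := fun x => le_max_right _ _
  have hsub : ∀ x, pos x - neg x = φ x := fun x => hmaxsub (φ x)
  -- sum of φ is zero
  have hsumM : ∑ x, (∑ y ∈ G.neighborFinset x, φ y / (G.degree y : ℝ)) = ∑ x, φ x :=
    sum_M hdeg φ
  have hsumφ : ∑ x, φ x = 0 := by
    have h1 : ∑ x, (φ x - ∑ y ∈ G.neighborFinset x, φ y / (G.degree y : ℝ))
        = lam * ∑ x, φ x := by
      rw [Finset.mul_sum]
      exact Finset.sum_congr rfl fun x _ => heig x
    rw [Finset.sum_sub_distrib, hsumM, sub_self] at h1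
    exact (mul_eq_zero.mp h1.symm).resolve_left hlam
  have hmass : ∑ x, pos x = ∑ x, neg x := by
    have h : ∑ x, (pos x - neg x) = 0 := by
      rw [Finset.sum_congr rfl fun x _ => hsub x]; exact hsumφ
    rw [Finset.sum_sub_distrib] at h
    linarith
  have hA : ∑ x, pos x + ∑ x, neg x = A := by
    rw [← Finset.sum_add_distrib, hAdef]
    exact Finset.sum_congr rfl fun x _ => hmaxadd (φ x)
  have hposA : ∑ x, pos x = A / 2 := by linarith
  -- the averaged measures
  set mp : V → ℝ := fun y => ∑ x ∈ G.neighborFinset y, pos x / (G.degree x : ℝ) with hmpd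
  set mn : V → ℝ := fun y => ∑ x ∈ G.neighborFinset y, neg x / (G.degree x : ℝ) with hmnd
  have hmp0 : ∀ y, 0 ≤ mp y := fun y =>
    Finset.sum_nonneg fun x _ => div_nonneg (hpos0 x) (Nat.cast_nonneg _)
  have hmn0 : ∀ y, 0 ≤ mn y := fun y =>
    Finset.sum_nonneg fun x _ => div_nonneg (hneg0 x) (Nat.cast_nonneg _)
  have hsum_mp : ∑ y, mp y = ∑ x, pos x := sum_M hdeg pos
  have hsum_mn : ∑ y, mn y = ∑ x, neg x := sum_M hdeg neg
  have hMφ : ∀ x, (∑ y ∈ G.neighborFinset x, φ y / (G.degree y : ℝ)) = c * φ x := by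
    intro x
    have := heig x
    rw [hcdef]
    linarith
  have key : ∀ x, mp x - mn x = c * φ x := by
    intro x
    rw [← hMφ x, hmpd, hmnd, ← Finset.sum_sub_distrib]
    exact Finset.sum_congr rfl fun y _ => by rw [div_sub_div_same, hsub y]
  set ppos : V → ℝ := fun x => max (c * φ x) 0 with hpposd
  set pneg : V → ℝ := fun x => max (-(c * φ x)) 0 with hpnegd
  have hppos0 : ∀ x, 0 ≤ ppos x := fun x => le_max_right _ _
  have hpneg0 : ∀ x, 0 ≤ pneg x := fun x => le_max_right _ _
  have hpsub : ∀ x, ppos x - pneg x = c * φ x := fun x => hmaxsub (c * φ x)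
  set r : V → ℝ := fun x => mp x - ppos x with hrd
  have hr0 : ∀ x, 0 ≤ r x := by
    intro x
    have h1 : c * φ x ≤ mp x := by have := key x; have := hmn0 x; linarith
    have : ppos x ≤ mp x := max_le h1 (hmp0 x)
    simp only [hrd]; linarith
  have hmpr : mp = fun x => ppos x + r x := by
    funext x; simp only [hrd]; ring
  have hmnr : mn = fun x => pneg x + r x := by
    funext x
    have h1 := key x
    have h2 := hpsub x
    simp only [hrd]; linarith
  -- masses of ppos/pneg
  have hsum_p : ∑ x, ppos x = ∑ x, pneg x := by
    have h : ∑ x, (ppos x - pneg x) = 0 := by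
      rw [Finset.sum_congr rfl fun x _ => hpsub x, ← Finset.mul_sum, hsumφ, mul_zero]
    rw [Finset.sum_sub_distrib] at h
    linarith
  -- nonempty coupling sets
  have n_pos_neg : (CSet G pos neg).Nonempty := cset_nonempty hpos0 hneg0 hmass
  have n_neg_pos : (CSet G neg pos).Nonempty := cset_nonempty hneg0 hpos0 hmass.symm
  have n_pos_mp : (CSet G pos mp).Nonempty := cset_nonempty hpos0 hmp0 hsum_mp.symm
  have n_mp_neg : (CSet G mp neg).Nonempty :=
    cset_nonempty hmp0 hneg0 (hsum_mp.trans hmass)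
  have n_mp_mn : (CSet G mp mn).Nonempty :=
    cset_nonempty hmp0 hmn0 (hsum_mp.trans (hmass.trans hsum_mn.symm))
  have n_mn_neg : (CSet G mn neg).Nonempty := cset_nonempty hmn0 hneg0 hsum_mn
  have n_pp : (CSet G ppos pneg).Nonempty := cset_nonempty hppos0 hpneg0 hsum_p
  set W : ℝ := W1 G pos neg with hWd
  -- the step inequality
  have t1 : W1 G pos mp ≤ ∑ x, pos x := W1_step hdeg pos hpos0
  have t2 : W1 G mn neg ≤ ∑ x, neg x := by
    rw [W1_symm]
    exact W1_step hdeg neg hneg0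
  have t3 : W1 G mp mn ≤ W1 G ppos pneg := by
    rw [hmpr, hmnr]
    exact W1_add_diag r hr0 n_pp
  have t4 : W1 G ppos pneg ≤ |c| * W := by
    rcases le_or_gt 0 c with h | h
    · have e1 : ppos = fun x => c * pos x := funext fun x => hmaxmul c h (φ x)
      have e2 : pneg = fun x => c * neg x := by
        funext x
        rw [hpnegd]
        show max (-(c * φ x)) 0 = c * neg x
        rw [show -(c * φ x) = c * (-φ x) by ring]
        exact hmaxmul c h (-φ x)
      rw [e1, e2, abs_of_nonneg h]
      exact W1_smul_le c h n_pos_neg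
    · have hcn : 0 ≤ -c := by linarith
      have e1 : ppos = fun x => (-c) * neg x := by
        funext x
        rw [hpposd]
        show max (c * φ x) 0 = (-c) * neg x
        rw [show c * φ x = (-c) * (-φ x) by ring]
        exact hmaxmul (-c) hcn (-φ x)
      have e2 : pneg = fun x => (-c) * pos x := by
        funext x
        rw [hpnegd]
        show max (-(c * φ x)) 0 = (-c) * pos x
        rw [show -(c * φ x) = (-c) * φ x by ring]
        exact hmaxmul (-c) hcn (φ x)
      rw [e1, e2, abs_of_neg h]
      calc W1 G (fun x => (-c) * neg x) (fun x => (-c) * pos x)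
          ≤ (-c) * W1 G neg pos := W1_smul_le (-c) hcn n_neg_pos
        _ = (-c) * W := by rw [W1_symm neg pos]
  have hstep : W ≤ A + |c| * W := by
    have u1 : W ≤ W1 G pos mp + W1 G mp neg := W1_triangle hconn n_pos_mp n_mp_neg
    have u2 : W1 G mp neg ≤ W1 G mp mn + W1 G mn neg := W1_triangle hconn n_mp_mn n_mn_neg
    have := t3.trans t4
    linarith
  -- base bound
  have hbase : W ≤ D * A / 2 := by
    have := W1_le_diam (G := G) hpos0 hneg0 hmass
    rw [hposA] at this
    calc W ≤ D * (A / 2) := this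
      _ = D * A / 2 := by ring
  -- induction
  have main : ∀ n : ℕ, W ≤ |c| ^ n * (D * A / 2) + (∑ i ∈ Finset.range n, |c| ^ i) * A := by
    intro n
    induction n with
    | zero => simpa using hbase
    | succ n ih =>
      have h2 : |c| * W ≤ |c| * (|c| ^ n * (D * A / 2) + (∑ i ∈ Finset.range n, |c| ^ i) * A) :=
        mul_le_mul_of_nonneg_left ih (abs_nonneg c)
      calc W ≤ A + |c| * W := hstep
        _ ≤ A + |c| * (|c| ^ n * (D * A / 2) + (∑ i ∈ Finset.range n, |c| ^ i) * A) := by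
            linarith
        _ = |c| ^ (n + 1) * (D * A / 2) + (∑ i ∈ Finset.range (n + 1), |c| ^ i) * A := by
            rw [geom_sum_succ]
            ring
  calc W1 G pos neg = W := rfl
    _ ≤ |c| ^ ℓ * (D * A / 2) + (∑ i ∈ Finset.range ℓ, |c| ^ i) * A := main ℓ
    _ = (|c| ^ ℓ * D / 2 + ∑ i ∈ Finset.range ℓ, |c| ^ i) * A := by ring
end
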